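/- Let X = [0,1] ⊆ ℝ with its standard topology and let R = {(x,y) ∈ X × X : x ≤ 1/2 ∧ x ≤ y ∧ y ≤ 1/2} ∪ {(x,y) ∈ X × X : 1/2 ≤ x ∧ x ≤ y}. Then R is reflexive and anti-symmetric (hence semi-transitive with transitive symmetric part), all its sections R(z) and R⁻¹(z) are closed, but R is not transitive, R is not complete, and the asymmetric part P = R \ R⁻¹ does not have open sections: P(1/4) = (1/4, 1/2] and P⁻¹(3/4) = [1/2, 3/4) are not open in [0,1]. -/
import Mathlib


open Set

/-- The transpose `R⁻¹ = {(x,y) : (y,x) ∈ R}` of a relation. -/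
def transp {α : Type} (R : Set (α × α)) : Set (α × α) := {p | (p.2, p.1) ∈ R}

/-- The upper section `R(x) = {y : (x,y) ∈ R}`. -/
def upSec {α : Type} (R : Set (α × α)) (x : α) : Set α := {y | (x, y) ∈ R}

/-- The lower section `R⁻¹(x) = {y : (y,x) ∈ R}`. -/
def lowSec {α : Type} (R : Set (α × α)) (x : α) : Set α := {y | (y, x) ∈ R}

/-- The symmetric part `I = R ∩ R⁻¹`. -/
def symmPart {α : Type} (R : Set (α × α)) : Set (α × α) := R ∩ transp R

/-- The asymmetric part `P = R \ R⁻¹`. -/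
def asymmPart {α : Type} (R : Set (α × α)) : Set (α × α) := R \ transp R

/-- Composition: `(y,x) ∈ relComp R R'` iff there is `z` with `(y,z) ∈ R'` and `(z,x) ∈ R`. -/
def relComp {α : Type} (R R' : Set (α × α)) : Set (α × α) :=
  {p | ∃ z, (p.1, z) ∈ R' ∧ (z, p.2) ∈ R}

/-- `R` is transitive if `R ∘ R ⊆ R`. -/
def IsTransRel {α : Type} (R : Set (α × α)) : Prop := relComp R R ⊆ R

/-- `R` is complete if `R ∪ R⁻¹ = X × X`. -/
def IsCompleteRel {α : Type} (R : Set (α × α)) : Prop := R ∪ transp R = Set.univ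

/-- `R` is non-trivial if its asymmetric part is nonempty. -/
def IsNontrivialRel {α : Type} (R : Set (α × α)) : Prop := asymmPart R ≠ ∅

/-- `R` is semi-transitive if `I ∘ P ⊆ P` and `P ∘ I ⊆ P`. -/
def IsSemiTransRel {α : Type} (R : Set (α × α)) : Prop :=
  relComp (symmPart R) (asymmPart R) ⊆ asymmPart R ∧
  relComp (asymmPart R) (symmPart R) ⊆ asymmPart R

/-- `(R_H, R_S)` is a bi-relation if `R_H ⊆ R_S` and `P_S ⊆ P_H`. -/
def IsBiRelation {α : Type} (RH RS : Set (α × α)) : Prop :=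
  RH ⊆ RS ∧ asymmPart RS ⊆ asymmPart RH

/-- Semi-transitivity of a bi-relation: (i) `R_H` semi-transitive, (ii) `I_S ∘ R_H ⊆ R_S`,
`R_H ∘ I_S ⊆ R_S`, (iii) `P_H ∩ (P_S ∘ I_S) ⊆ P_S`, `P_H ∩ (I_S ∘ P_S) ⊆ P_S`. -/
def IsSemiTransBiRel {α : Type} (RH RS : Set (α × α)) : Prop :=
  IsSemiTransRel RH ∧
  relComp (symmPart RS) RH ⊆ RS ∧
  relComp RH (symmPart RS) ⊆ RS ∧
  asymmPart RH ∩ relComp (asymmPart RS) (symmPart RS) ⊆ asymmPart RS ∧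
  asymmPart RH ∩ relComp (symmPart RS) (asymmPart RS) ⊆ asymmPart RS

/-- The relation of Example 3 on `[0,1]`. -/
def exRel : Set (unitInterval × unitInterval) :=
  {p | ((p.1 : ℝ) ≤ 1 / 2 ∧ (p.1 : ℝ) ≤ (p.2 : ℝ) ∧ (p.2 : ℝ) ≤ 1 / 2) ∨
       (1 / 2 ≤ (p.1 : ℝ) ∧ (p.1 : ℝ) ≤ (p.2 : ℝ))}


lemma isClosed_const' {P : Prop} : IsClosed {t : ℝ | P} := by
  by_cases h : P <;> simp [h]

lemma exRel_antisymm' : ∀ p ∈ symmPart exRel, p.1 = p.2 := by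
  rintro ⟨x, y⟩ ⟨hxy, hyx⟩
  simp only [exRel, transp, Set.mem_setOf_eq] at hxy hyx
  have : (x : ℝ) = (y : ℝ) := by
    rcases hxy with ⟨_, h1, _⟩ | ⟨_, h1⟩ <;> rcases hyx with ⟨_, h2, _⟩ | ⟨_, h2⟩ <;> linarith
  exact Subtype.ext this

/-- `exRel` is reflexive and anti-symmetric (hence semi-transitive with a
transitive symmetric part), its sections are closed, but it is neither transitive nor
complete, and its asymmetric part `P` fails to have open sections:
`P(1/4) = (1/4, 1/2]` and `P⁻¹(3/4) = [1/2, 3/4)` are not open in `[0,1]`. -/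
theorem exRel_properties :
    (∀ x : unitInterval, (x, x) ∈ exRel) ∧
    symmPart exRel ⊆ {p : unitInterval × unitInterval | p.1 = p.2} ∧
    IsSemiTransRel exRel ∧ IsTransRel (symmPart exRel) ∧
    (∀ z : unitInterval, IsClosed (upSec exRel z) ∧ IsClosed (lowSec exRel z)) ∧
    ¬ IsTransRel exRel ∧
    ¬ IsCompleteRel exRel ∧
    (upSec (asymmPart exRel) (⟨1 / 4, by norm_num⟩ : unitInterval) =
        {w : unitInterval | 1 / 4 < (w : ℝ) ∧ (w : ℝ) ≤ 1 / 2} ∧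
      ¬ IsOpen (upSec (asymmPart exRel) (⟨1 / 4, by norm_num⟩ : unitInterval))) ∧
    (lowSec (asymmPart exRel) (⟨3 / 4, by norm_num⟩ : unitInterval) =
        {w : unitInterval | 1 / 2 ≤ (w : ℝ) ∧ (w : ℝ) < 3 / 4} ∧
      ¬ IsOpen (lowSec (asymmPart exRel) (⟨3 / 4, by norm_num⟩ : unitInterval))) := by

  have antisymm : ∀ {p : unitInterval × unitInterval}, p ∈ symmPart exRel → p.1 = p.2 :=
    fun hp => exRel_antisymm' _ hp
  have antisymm' : symmPart exRel ⊆ {p : unitInterval × unitInterval | p.1 = p.2} :=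
    fun p hp => exRel_antisymm' p hp
  have refl : ∀ x : unitInterval, (x, x) ∈ exRel := by
    intro x
    rcases le_total (x : ℝ) (1/2) with h | h
    · exact Or.inl ⟨h, le_refl _, h⟩
    · exact Or.inr ⟨h, le_refl _⟩
  refine ⟨refl, antisymm', ?_, ?_, ?_, ?_, ?_, ⟨?_, ?_⟩, ⟨?_, ?_⟩⟩
  · -- semi-transitive
    constructor
    · rintro ⟨x, y⟩ ⟨z, hP, hI⟩
      have : z = y := exRel_antisymm' (z, y) hI
      subst this; exact hP
    · rintro ⟨x, y⟩ ⟨z, hI, hP⟩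
      have : x = z := exRel_antisymm' (x, z) hI
      subst this; exact hP
  · -- symmPart transitive
    rintro ⟨x, y⟩ ⟨z, h1, h2⟩
    have e1 : x = z := exRel_antisymm' (x, z) h1
    subst e1
    have e2 : x = y := exRel_antisymm' (x, y) h2
    subst e2
    exact h1
  · -- closed sections
    intro z
    constructor
    · have : upSec exRel z = (fun y : unitInterval => (y : ℝ)) ⁻¹'
          ({t : ℝ | ((z:ℝ) ≤ 1/2)} ∩ ({t | (z:ℝ) ≤ t} ∩ {t | t ≤ 1/2}) ∪
           {t : ℝ | (1/2 ≤ (z:ℝ))} ∩ {t | (z:ℝ) ≤ t}) := by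
        ext y; simp only [upSec, exRel, Set.mem_setOf_eq, Set.mem_preimage,
          Set.mem_union, Set.mem_inter_iff]
      rw [this]
      exact ((isClosed_const'.inter ((isClosed_Ici.inter isClosed_Iic))).union
        (isClosed_const'.inter isClosed_Ici)).preimage continuous_subtype_val
    · have : lowSec exRel z = (fun y : unitInterval => (y : ℝ)) ⁻¹'
          ({t : ℝ | t ≤ 1/2} ∩ ({t | t ≤ (z:ℝ)} ∩ {t : ℝ | ((z:ℝ) ≤ 1/2)}) ∪
           {t : ℝ | 1/2 ≤ t} ∩ {t | t ≤ (z:ℝ)}) := by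
        ext y; simp only [lowSec, exRel, Set.mem_setOf_eq, Set.mem_preimage,
          Set.mem_union, Set.mem_inter_iff]
      rw [this]
      exact ((isClosed_Iic.inter (isClosed_Iic.inter isClosed_const')).union
        (isClosed_Ici.inter isClosed_Iic)).preimage continuous_subtype_val
  · -- not transitive
    intro h
    have h14 : (1:ℝ)/4 ∈ unitInterval := by norm_num [unitInterval]
    have h12 : (1:ℝ)/2 ∈ unitInterval := by norm_num [unitInterval]
    have h34 : (3:ℝ)/4 ∈ unitInterval := by norm_num [unitInterval]
    have hmem : ((⟨1/4, h14⟩ : unitInterval), (⟨3/4, h34⟩ : unitInterval)) ∈ exRel := by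
      apply h
      refine ⟨⟨1/2, h12⟩, ?_, ?_⟩
      · exact Or.inl ⟨by norm_num, by norm_num, by norm_num⟩
      · exact Or.inr ⟨by norm_num, by norm_num⟩
    rcases hmem with ⟨_, _, h1⟩ | ⟨h1, _⟩ <;> norm_num at h1
  · -- not complete
    intro h
    have h14 : (1:ℝ)/4 ∈ unitInterval := by norm_num [unitInterval]
    have h34 : (3:ℝ)/4 ∈ unitInterval := by norm_num [unitInterval]
    have : ((⟨1/4, h14⟩ : unitInterval), (⟨3/4, h34⟩ : unitInterval)) ∈
        exRel ∪ transp exRel := h ▸ Set.mem_univ _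
    rcases this with h1 | h1 <;> norm_num [exRel, transp, Set.mem_setOf_eq] at h1
  · -- upSec of asymmPart at 1/4
    ext w
    have hw1 := w.2.1
    have hw2 := w.2.2
    simp only [asymmPart, upSec, transp, exRel, Set.mem_diff, Set.mem_setOf_eq,
      Set.mem_setOf_eq]
    constructor
    · rintro ⟨h1, h2⟩
      rcases h1 with ⟨_, ha, hb⟩ | ⟨ha, _⟩
      · constructor
        · by_contra hc
          push_neg at hc
          exact h2 (Or.inl ⟨by linarith, by norm_num [hc], by norm_num⟩)
        · exact hb
      · norm_num at ha
    · rintro ⟨h1, h2⟩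
      refine ⟨Or.inl ⟨by norm_num, by linarith, h2⟩, ?_⟩
      rintro (⟨_, ha, _⟩ | ⟨ha, hb⟩)
      · norm_num at ha; linarith
      · norm_num at ha hb; linarith
  · -- not open
    intro hopen
    have h12 : (1:ℝ)/2 ∈ unitInterval := by norm_num [unitInterval]
    have hmem : (⟨1/2, h12⟩ : unitInterval) ∈
        upSec (asymmPart exRel) (⟨1 / 4, by norm_num⟩ : unitInterval) := by
      refine ⟨Or.inl ⟨by norm_num, by norm_num, by norm_num⟩, ?_⟩
      rintro (⟨_, ha, _⟩ | ⟨_, ha⟩) <;> norm_num at ha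
    rcases Metric.isOpen_iff.1 hopen _ hmem with ⟨ε, hε, hball⟩
    set δ := min (ε/2) (1/4) with hδ
    have hδpos : 0 < δ := by positivity
    have hδle : δ ≤ 1/4 := min_le_right _ _
    have hy : (1:ℝ)/2 + δ ∈ unitInterval := by
      simp only [unitInterval, Set.mem_Icc]; constructor <;> linarith
    have : (⟨1/2 + δ, hy⟩ : unitInterval) ∈ Metric.ball (⟨1/2, h12⟩ : unitInterval) ε := by
      simp only [Metric.mem_ball, Subtype.dist_eq, Real.dist_eq]
      rw [abs_of_pos (by linarith)]
      have : δ ≤ ε/2 := min_le_left _ _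
      linarith
    have hmem2 := hball this
    rcases hmem2 with ⟨h1, _⟩
    rcases h1 with ⟨_, _, ha⟩ | ⟨ha, _⟩
    · have ha' : (1:ℝ)/2 + δ ≤ 1/2 := ha
      linarith
    · have ha' : (1:ℝ)/2 ≤ 1/4 := ha
      linarith
  · -- lowSec of asymmPart at 3/4
    ext w
    have hw1 := w.2.1
    have hw2 := w.2.2
    simp only [asymmPart, lowSec, transp, exRel, Set.mem_diff, Set.mem_setOf_eq]
    constructor
    · rintro ⟨h1, h2⟩
      rcases h1 with ⟨_, _, hb⟩ | ⟨ha, hb⟩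
      · norm_num at hb
      · refine ⟨ha, ?_⟩
        by_contra hc
        push_neg at hc
        exact h2 (Or.inr ⟨by norm_num, by norm_num [hc]⟩)
    · rintro ⟨h1, h2⟩
      refine ⟨Or.inr ⟨h1, by linarith⟩, ?_⟩
      rintro (⟨ha, _, _⟩ | ⟨_, ha⟩)
      · norm_num at ha
      · norm_num at ha; linarith
  · -- not open
    intro hopen
    have h12 : (1:ℝ)/2 ∈ unitInterval := by norm_num [unitInterval]
    have hmem : (⟨1/2, h12⟩ : unitInterval) ∈
        lowSec (asymmPart exRel) (⟨3 / 4, by norm_num⟩ : unitInterval) := by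
      refine ⟨Or.inr ⟨by norm_num, by norm_num⟩, ?_⟩
      rintro (⟨ha, _, _⟩ | ⟨_, ha⟩) <;> norm_num at ha
    rcases Metric.isOpen_iff.1 hopen _ hmem with ⟨ε, hε, hball⟩
    set δ := min (ε/2) (1/4) with hδ
    have hδpos : 0 < δ := by positivity
    have hδle : δ ≤ 1/4 := min_le_right _ _
    have hy : (1:ℝ)/2 - δ ∈ unitInterval := by
      simp only [unitInterval, Set.mem_Icc]; constructor <;> linarith
    have : (⟨1/2 - δ, hy⟩ : unitInterval) ∈ Metric.ball (⟨1/2, h12⟩ : unitInterval) ε := by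
      simp only [Metric.mem_ball, Subtype.dist_eq, Real.dist_eq]
      rw [abs_of_neg (by linarith)]
      have : δ ≤ ε/2 := min_le_left _ _
      linarith
    have hmem2 := hball this
    rcases hmem2 with ⟨h1, _⟩
    rcases h1 with ⟨_, _, ha⟩ | ⟨ha, _⟩
    · have ha' : (3:ℝ)/4 ≤ 1/2 := ha
      linarith
    · have ha' : (1:ℝ)/2 ≤ 1/2 - δ := ha
      linarith
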